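/- The function g(θ) = 8θ²/cosh²θ on (0,∞) attains a maximum value λ_c; for every λ with 0 < λ < λ_c the equation g(θ) = λ has at least two distinct positive solutions θ, and for λ > λ_c it has no solution. -/

import Mathlib

/-!
Since `cosh θ ≥ e^θ / 2`, the curve `8θ²/cosh²θ` is dominated by `32 θ² e^{-θ}` and so tends to `0`
at infinity. Being continuous, vanishing at `0` and positive elsewhere, it attains its maximum
`λ_c` at some `θ₀ > 0`; the intermediate value theorem on `[0, θ₀]` and on `[θ₀, ∞)` then yields
two solutions of `g θ = λ` for each `0 < λ < λ_c`.
-/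

open Real Set Filter Topology

theorem ContinuousOn.exists_isMaxOn_Ici_of_tendsto_atTop {f : ℝ → ℝ} {a b l : ℝ}
    (hf : ContinuousOn f (Ici a)) (hlim : Tendsto f atTop (𝓝 l)) (hb : a ≤ b) (hlb : l < f b) :
    ∃ x ∈ Ici a, IsMaxOn f (Ici a) x := by
  refine hf.exists_isMaxOn' isClosed_Ici hb ?_
  rw [cocompact_eq_atBot_atTop, inf_sup_right, (disjoint_atBot_principal_Ici a).eq_bot,
    bot_sup_eq]
  exact (hlim.eventually (ge_mem_nhds hlb)).filter_mono inf_le_left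

theorem ContinuousOn.exists_gt_eq_of_tendsto_atTop {f : ℝ → ℝ} {x₀ l y : ℝ}
    (hf : ContinuousOn f (Ici x₀)) (hlim : Tendsto f atTop (𝓝 l)) (hly : l < y) (hy : y < f x₀) :
    ∃ x > x₀, f x = y := by
  obtain ⟨T, hfT, hT⟩ :=
    ((hlim.eventually (gt_mem_nhds hly)).and (eventually_ge_atTop x₀)).exists
  obtain ⟨x, hx, hfx⟩ := intermediate_value_Ioo' hT (hf.mono Icc_subset_Ici_self) ⟨hfT, hy⟩
  exact ⟨x, hx.1, hfx⟩

noncomputable def bratuCurve (θ : ℝ) : ℝ := 8 * θ ^ 2 / cosh θ ^ 2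

theorem continuous_bratuCurve : Continuous bratuCurve :=
  (continuous_const.mul (continuous_pow 2)).div (continuous_cosh.pow 2)
    fun θ => (pow_pos (cosh_pos θ) 2).ne'

@[simp]
theorem bratuCurve_zero : bratuCurve 0 = 0 := by simp [bratuCurve]

theorem bratuCurve_pos {θ : ℝ} (hθ : θ ≠ 0) : 0 < bratuCurve θ := by
  unfold bratuCurve
  have := cosh_pos θ
  positivity

theorem bratuCurve_le {θ : ℝ} (hθ : 0 ≤ θ) : bratuCurve θ ≤ 32 * (θ ^ 2 * exp (-θ)) := by
  have hcosh : exp θ / 2 ≤ cosh θ := by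
    rw [cosh_eq]
    linarith [exp_pos (-θ)]
  have hexp : exp θ ≤ exp θ ^ 2 := le_self_pow₀ (one_le_exp hθ) two_ne_zero
  have hcosh_sq : exp θ / 4 ≤ cosh θ ^ 2 := by nlinarith [exp_pos θ]
  rw [bratuCurve, div_le_iff₀ (pow_pos (cosh_pos θ) 2), exp_neg]
  calc 8 * θ ^ 2 = 32 * (θ ^ 2 * (exp θ)⁻¹) * (exp θ / 4) := by field_simp; ring
    _ ≤ 32 * (θ ^ 2 * (exp θ)⁻¹) * cosh θ ^ 2 := by gcongr

theorem tendsto_bratuCurve_atTop : Tendsto bratuCurve atTop (𝓝 0) := by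
  have hdom := (tendsto_pow_mul_exp_neg_atTop_nhds_zero 2).const_mul 32
  rw [mul_zero] at hdom
  refine tendsto_of_tendsto_of_tendsto_of_le_of_le' tendsto_const_nhds hdom ?_ ?_
  · exact Eventually.of_forall fun θ => by unfold bratuCurve; positivity
  · filter_upwards [eventually_ge_atTop 0] with θ hθ using bratuCurve_le hθ

theorem bratu_bifurcation_curve (g : ℝ → ℝ)
    (hg : ∀ θ, g θ = 8 * θ^2 / (Real.cosh θ)^2) :
    ∃ lamc : ℝ,
      (∃ θ > (0:ℝ), g θ = lamc) ∧
      (∀ θ > (0:ℝ), g θ ≤ lamc) ∧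
      (∀ lam : ℝ, 0 < lam → lam < lamc →
        ∃ θ₁ θ₂ : ℝ, 0 < θ₁ ∧ 0 < θ₂ ∧ θ₁ ≠ θ₂ ∧ g θ₁ = lam ∧ g θ₂ = lam) ∧
      (∀ lam : ℝ, lamc < lam → ¬∃ θ > (0:ℝ), g θ = lam) := by
  obtain rfl : g = bratuCurve := funext hg
  have hcont : ∀ {s}, ContinuousOn bratuCurve s := continuous_bratuCurve.continuousOn
  obtain ⟨θ₀, hθ₀, hmax⟩ := hcont.exists_isMaxOn_Ici_of_tendsto_atTop tendsto_bratuCurve_atTop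
    zero_le_one (bratuCurve_pos one_ne_zero)
  have hθ₀_pos : 0 < θ₀ := by
    refine lt_of_le_of_ne hθ₀ fun h => ?_
    have h1 : bratuCurve 1 ≤ bratuCurve θ₀ := hmax (mem_Ici.2 zero_le_one)
    rw [← h, bratuCurve_zero] at h1
    exact h1.not_gt (bratuCurve_pos one_ne_zero)
  refine ⟨bratuCurve θ₀, ⟨θ₀, hθ₀_pos, rfl⟩, fun θ hθ => hmax (mem_Ici.2 hθ.le), ?_, ?_⟩
  · intro lam hlam hlt
    obtain ⟨θ₁, ⟨hθ₁_pos, hθ₁_lt⟩, hθ₁⟩ := intermediate_value_Ioo hθ₀ hcont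
      (by simpa using And.intro hlam hlt)
    obtain ⟨θ₂, hθ₂_gt, hθ₂⟩ := hcont.exists_gt_eq_of_tendsto_atTop
      tendsto_bratuCurve_atTop hlam hlt
    exact ⟨θ₁, θ₂, hθ₁_pos, hθ₀_pos.trans hθ₂_gt, (hθ₁_lt.trans hθ₂_gt).ne, hθ₁, hθ₂⟩
  · rintro lam hlt ⟨θ, hθ, rfl⟩
    exact (hmax (mem_Ici.2 hθ.le)).not_gt hlt
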